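/- For positive integers k ≠ j, the rational numbers t_k and t_j are distinct; consequently the map k ↦ t_k is injective on positive integers. -/

import Mathlib

/-- The elliptic curve `E' : y² = x³ + 9x` over `ℚ`. -/
def Ecurve : WeierstrassCurve.Affine ℚ :=
  { a₁ := 0, a₂ := 0, a₃ := 0, a₄ := 9, a₆ := 0 }

theorem Tpt_nonsingular : Ecurve.Nonsingular 4 10 := by
  simp only [WeierstrassCurve.Affine.nonsingular_iff, WeierstrassCurve.Affine.equation_iff, Ecurve]
  norm_num

/-- The point `T = (4, 10)` on `E'`. -/
noncomputable def Tpt : Ecurve.Point := WeierstrassCurve.Affine.Point.some _ _ Tpt_nonsingular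


open WeierstrassCurve.Affine

lemma norm_odd_int (n : ℤ) (hn : ¬ (2:ℤ) ∣ n) : ‖(n : ℚ_[2])‖ = 1 := by
  refine le_antisymm (Padic.norm_int_le_one n) ?_
  by_contra h
  push_neg at h
  exact hn (by exact_mod_cast (Padic.norm_intCast_lt_one_iff (k := n)).mp h)

lemma Ecurve_eqn {x y : ℚ} (h : Ecurve.Equation x y) : y^2 = x^3 + 9*x := by
  have := (WeierstrassCurve.Affine.equation_iff (W := Ecurve) x y).mp h
  simp only [Ecurve] at this
  linear_combination this

lemma Ecurve_negY (x y : ℚ) : Ecurve.negY x y = -y := by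
  simp [WeierstrassCurve.Affine.negY, Ecurve]

lemma two_pow_ne {a b : ℕ} (h : a ≠ b) : (2:ℝ)^a ≠ 2^b :=
  fun hc => h (pow_right_injective₀ (by norm_num) (by norm_num) hc)

lemma norm_y {x y : ℚ} (m : ℕ) (hm : 1 ≤ m) (h : y^2 = x^3 + 9*x)
    (hx : ‖(x:ℚ_[2])‖ = 2^(2*m)) : ‖(y:ℚ_[2])‖ = 2^(3*m) := by
  have h9 : ‖(9 : ℚ_[2])‖ = 1 := by
    have := norm_odd_int 9 (by decide)
    simpa using this
  have hc : ((y:ℚ_[2]))^2 = (x:ℚ_[2])^3 + 9*(x:ℚ_[2]) := by exact_mod_cast congrArg (Rat.cast : ℚ → ℚ_[2]) h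
  have h1 : ‖((x:ℚ_[2]))^3‖ = 2^(6*m) := by
    rw [norm_pow, hx, ← pow_mul]; ring_nf
  have h2 : ‖(9:ℚ_[2])*(x:ℚ_[2])‖ = 2^(2*m) := by rw [norm_mul, h9, one_mul, hx]
  have hne : ‖((x:ℚ_[2]))^3‖ ≠ ‖(9:ℚ_[2])*(x:ℚ_[2])‖ := by
    rw [h1, h2]; exact two_pow_ne (by omega)
  have hmax : ‖((y:ℚ_[2]))^2‖ = 2^(6*m) := by
    rw [hc, Padic.add_eq_max_of_ne hne, h1, h2]
    rw [max_eq_left]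
    exact pow_le_pow_right₀ (by norm_num) (by omega)
  rw [norm_pow] at hmax
  have hy0 : (0:ℝ) ≤ ‖(y:ℚ_[2])‖ := norm_nonneg _
  have h3 : ((2:ℝ)^(3*m))^2 = 2^(6*m) := by rw [← pow_mul]; ring_nf
  nlinarith [pow_pos (show (0:ℝ) < 2 by norm_num) (3*m)]

/-- `Good m P` means `P` is an affine point whose `x`-coordinate has `2`-adic norm `2^(2m)`. -/
def Good (m : ℕ) (P : Ecurve.Point) : Prop :=
  ∃ (x y : ℚ) (h : Ecurve.Nonsingular x y), P = .some _ _ h ∧ ‖(x:ℚ_[2])‖ = 2^(2*m)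

lemma Good.ne_zero {m  : ℕ} {P : Ecurve.Point} (h : Good m P) : P ≠ 0 := by
  obtain ⟨x, y, hns, rfl, -⟩ := h
  exact WeierstrassCurve.Affine.Point.some_ne_zero hns

lemma Good.double {m : ℕ} {P : Ecurve.Point} (hm : 1 ≤ m) (hP : Good m P) :
    Good (m+1) (2 • P) := by
  obtain ⟨x, y, hns, rfl, hx⟩ := hP
  have heq := Ecurve_eqn hns.1
  have hy : ‖(y:ℚ_[2])‖ = 2^(3*m) := norm_y m hm heq hx
  have hy0 : y ≠ 0 := by
    intro h0
    rw [h0] at hy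
    simp at hy
    exact absurd hy.symm (by positivity)
  have hyne : y ≠ Ecurve.negY x y := by
    rw [Ecurve_negY]; intro hcon; apply hy0; linarith
  have h2 : (2 • (WeierstrassCurve.Affine.Point.some _ _ hns) : Ecurve.Point)
      = .some _ _ hns + .some _ _ hns := two_nsmul _
  rw [h2, WeierstrassCurve.Affine.Point.add_self_of_Y_ne hyne]
  refine ⟨_, _, _, rfl, ?_⟩
  have hslope : Ecurve.slope x x y y = (3*x^2+9)/(2*y) := by
    rw [WeierstrassCurve.Affine.slope_of_Y_ne rfl hyne, Ecurve_negY]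
    simp only [Ecurve]
    ring_nf
  have haddX : Ecurve.addX x x (Ecurve.slope x x y y) = ((3*x^2+9)/(2*y))^2 - 2*x := by
    rw [WeierstrassCurve.Affine.addX, hslope]
    simp only [Ecurve]
    ring
  rw [haddX]
  -- cast to ℚ_[2]
  have hcast : (((((3*x^2+9)/(2*y))^2 - 2*x : ℚ)) : ℚ_[2])
      = ((3*(x:ℚ_[2])^2+9)/(2*(y:ℚ_[2])))^2 - 2*(x:ℚ_[2]) := by push_cast; ring
  rw [hcast]
  have h3 : ‖(3 : ℚ_[2])‖ = 1 := by
    have := norm_odd_int 3 (by decide); simpa using this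
  have h9 : ‖(9 : ℚ_[2])‖ = 1 := by
    have := norm_odd_int 9 (by decide); simpa using this
  have h2n : ‖(2 : ℚ_[2])‖ = 2⁻¹ := by simpa using Padic.norm_p (p := 2)
  have hnum : ‖3*(x:ℚ_[2])^2+9‖ = 2^(4*m) := by
    have ha : ‖3*(x:ℚ_[2])^2‖ = 2^(4*m) := by
      rw [norm_mul, h3, one_mul, norm_pow, hx, ← pow_mul]; ring_nf
    have hne : ‖3*(x:ℚ_[2])^2‖ ≠ ‖(9:ℚ_[2])‖ := by
      rw [ha, h9]
      have := two_pow_ne (a := 4*m) (b := 0) (by omega)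
      simpa using this
    rw [Padic.add_eq_max_of_ne hne, ha, h9, max_eq_left]
    exact one_le_pow₀ one_le_two
  have hden : ‖2*(y:ℚ_[2])‖ = 2⁻¹ * 2^(3*m) := by rw [norm_mul, h2n, hy]
  have hL : ‖(3*(x:ℚ_[2])^2+9)/(2*(y:ℚ_[2]))‖ = 2^(m+1) := by
    rw [norm_div, hnum, hden]
    rw [show (4:ℕ)*m = (m+1) + (3*m - 1) by omega, pow_add]
    rw [show (3:ℕ)*m = 1 + (3*m-1) by omega, pow_add]
    field_simp
    rw [pow_add]
    ring_nf
    rw [show 1 + (m*3-1) - 1 = m*3-1 by omega]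
  have hL2 : ‖((3*(x:ℚ_[2])^2+9)/(2*(y:ℚ_[2])))^2‖ = 2^(2*m+2) := by
    rw [norm_pow, hL, ← pow_mul]; ring_nf
  have h2x : ‖2*(x:ℚ_[2])‖ = 2⁻¹ * 2^(2*m) := by rw [norm_mul, h2n, hx]
  have hne2 : ‖((3*(x:ℚ_[2])^2+9)/(2*(y:ℚ_[2])))^2‖ ≠ ‖-(2*(x:ℚ_[2]))‖ := by
    rw [norm_neg, hL2, h2x]
    intro hcon
    have hlt : (2:ℝ)⁻¹ * 2^(2*m) < 2^(2*m+2) := by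
      have : (2:ℝ)^(2*m) < 2^(2*m+2) := pow_lt_pow_right₀ one_lt_two (by omega)
      nlinarith [pow_pos (show (0:ℝ) < 2 by norm_num) (2*m)]
    rw [hcon] at hlt
    exact lt_irrefl _ hlt
  rw [sub_eq_add_neg, Padic.add_eq_max_of_ne hne2, norm_neg, hL2, h2x]
  rw [max_eq_left]
  · ring_nf
  · calc (2:ℝ)⁻¹ * 2^(2*m) ≤ 1 * 2^(2*m) := by
          apply mul_le_mul_of_nonneg_right (by norm_num) (by positivity)
    _ ≤ 2^(2*m+2) := by
          rw [one_mul]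
          exact pow_le_pow_right₀ one_le_two (by omega)

lemma good_two : Good 2 (2 • Tpt) := by
  have hyne : (10:ℚ) ≠ Ecurve.negY 4 10 := by rw [Ecurve_negY]; norm_num
  have h2 : (2 • Tpt : Ecurve.Point) = .some _ _ Tpt_nonsingular + .some _ _ Tpt_nonsingular :=
    two_nsmul _
  rw [h2, WeierstrassCurve.Affine.Point.add_self_of_Y_ne hyne]
  refine ⟨_, _, _, rfl, ?_⟩
  have hslope : Ecurve.slope 4 4 10 10 = 57/20 := by
    rw [WeierstrassCurve.Affine.slope_of_Y_ne rfl hyne, Ecurve_negY]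
    simp only [Ecurve]
    norm_num
  have haddX : Ecurve.addX 4 4 (Ecurve.slope 4 4 10 10) = 49/400 := by
    rw [WeierstrassCurve.Affine.addX, hslope]
    simp only [Ecurve]
    norm_num
  rw [haddX]
  have : ((49/400 : ℚ) : ℚ_[2]) = 49 / (2^4 * 25) := by push_cast; norm_num
  rw [this, norm_div, norm_mul, norm_pow]
  have h49 : ‖(49 : ℚ_[2])‖ = 1 := by
    have := norm_odd_int 49 (by decide); simpa using this
  have h25 : ‖(25 : ℚ_[2])‖ = 1 := by
    have := norm_odd_int 25 (by decide); simpa using this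
  have h2n : ‖(2 : ℚ_[2])‖ = 2⁻¹ := by simpa using Padic.norm_p (p := 2)
  rw [h49, h25, h2n]
  norm_num

lemma good_unique {m m' : ℕ} {P : Ecurve.Point} (h : Good m P) (h' : Good m' P) : m = m' := by
  obtain ⟨x, y, hns, rfl, hx⟩ := h
  obtain ⟨x', y', hns', heq, hx'⟩ := h'
  obtain ⟨hxx, -⟩ := WeierstrassCurve.Affine.Point.some.inj heq
  rw [← hxx] at hx'
  have := hx.symm.trans hx'
  have h2 := pow_right_injective₀ (show (0:ℝ) < 2 by norm_num) (by norm_num) this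
  omega

lemma good_iter {m : ℕ} {P : Ecurve.Point} (hm : 1 ≤ m) (h : Good m P) (c : ℕ) :
    Good (m + c) ((2^c) • P) := by
  induction c with
  | zero => simpa using h
  | succ c ih =>
      have : (2^(c+1)) • P = 2 • ((2^c) • P) := by
        rw [pow_succ, mul_nsmul]
      rw [this]
      have := Good.double (m := m + c) (by omega) ih
      simpa [add_assoc] using this

lemma Tpt_not_torsion (n : ℕ) (hn : 0 < n) : n • Tpt ≠ 0 := by
  intro h0
  set P : Ecurve.Point := 2 • Tpt with hP
  have hPfin : n • P = 0 := by
    rw [hP, ← mul_nsmul, mul_comm, mul_nsmul, h0, nsmul_zero]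
  have hfin : IsOfFinAddOrder P := isOfFinAddOrder_iff_nsmul_eq_zero.mpr ⟨n, hn, hPfin⟩
  set d := addOrderOf P with hd
  have hd0 : d ≠ 0 := (addOrderOf_pos_iff.mpr hfin).ne'
  obtain ⟨a, b, hb2, hdab⟩ := Nat.exists_eq_pow_mul_and_not_dvd hd0 2 (by norm_num)
  set R : Ecurve.Point := (2^a) • P with hR
  have hgoodR : Good (2 + a) R := good_iter (by norm_num) good_two a
  have hbR : b • R = 0 := by
    rw [hR, ← mul_nsmul, ← hdab, hd, addOrderOf_nsmul_eq_zero]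
  have hR0 : R ≠ 0 := hgoodR.ne_zero
  have hb0 : b ≠ 0 := by rintro rfl; simp at hdab; exact hd0 hdab
  have hb1 : b ≠ 1 := by rintro rfl; rw [one_nsmul] at hbR; exact hR0 hbR
  have hbodd : Odd b := Nat.odd_iff.mpr (by omega)
  set c := b.totient with hc
  have hc1 : 1 ≤ c := Nat.totient_pos.mpr (Nat.pos_of_ne_zero hb0)
  have hmod : 2^c % b = 1 := by
    have := Nat.ModEq.pow_totient (hbodd.coprime_two_left)
    have h1b : 1 % b = 1 := Nat.one_mod_eq_one.mpr hb1
    rwa [Nat.ModEq, h1b] at this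
  have hdiv : b * (2^c / b) + 1 = 2^c := by
    conv_rhs => rw [← Nat.div_add_mod (2^c) b]
    rw [hmod]
  have hfix : (2^c) • R = R := by
    rw [← hdiv, add_nsmul, one_nsmul, mul_nsmul, hbR, nsmul_zero, zero_add]
  have hgood2 : Good (2 + a + c) R := by
    rw [← hfix]; exact good_iter (by omega) hgoodR c
  have := good_unique hgoodR hgood2
  omega

/-- The map `k ↦ t_k = (3 - x_k)/(3 + x_k)`, where `(x_k, y_k)` are the coordinates of
`k • T`, is injective on positive integers. -/
theorem tk_injective (k j : ℕ) (hk : 0 < k) (hj : 0 < j) (hkj : k ≠ j)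
    (xk yk : ℚ) (hks : Ecurve.Nonsingular xk yk)
    (hkT : k • Tpt = WeierstrassCurve.Affine.Point.some _ _ hks) (hxk : xk ≠ -3)
    (xj yj : ℚ) (hjs : Ecurve.Nonsingular xj yj)
    (hjT : j • Tpt = WeierstrassCurve.Affine.Point.some _ _ hjs) (hxj : xj ≠ -3) :
    (3 - xk) / (3 + xk) ≠ (3 - xj) / (3 + xj) := by
  intro heq
  have h3k : (3:ℚ) + xk ≠ 0 := fun h => hxk (by linarith)
  have h3j : (3:ℚ) + xj ≠ 0 := fun h => hxj (by linarith)
  rw [div_eq_div_iff h3k h3j] at heq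
  have hxe : xk = xj := by nlinarith [heq]
  subst hxe
  have hk2 := Ecurve_eqn hks.1
  have hj2 := Ecurve_eqn hjs.1
  have hyy : (yk - yj) * (yk + yj) = 0 := by linear_combination hk2 - hj2
  rcases mul_eq_zero.mp hyy with h | h
  · -- yk = yj, so k • Tpt = j • Tpt
    have hy : yk = yj := by linarith
    subst hy
    have hkj' : k • Tpt = j • Tpt := by rw [hkT, hjT]
    rcases Nat.lt_or_ge j k with hlt | hge
    · refine Tpt_not_torsion (k - j) (by omega) ?_
      rw [sub_nsmul Tpt (le_of_lt hlt), hkj', add_neg_cancel]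
    · have hlt : k < j := by omega
      refine Tpt_not_torsion (j - k) (by omega) ?_
      rw [sub_nsmul Tpt (le_of_lt hlt), ← hkj', add_neg_cancel]
  · -- yk = -yj, so k • Tpt = -(j • Tpt)
    have hy : yk = -yj := by linarith
    subst hy
    have hnegj : (-(j • Tpt) : Ecurve.Point)
        = .some _ _ ((WeierstrassCurve.Affine.nonsingular_neg ..).mpr hjs) := by
      rw [hjT, WeierstrassCurve.Affine.Point.neg_some]
    simp only [Ecurve_negY] at hnegj
    have hsum : k • Tpt = -(j • Tpt) := by rw [hkT, hnegj]
    refine Tpt_not_torsion (k + j) (by omega) ?_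
    rw [add_nsmul, hsum, neg_add_cancel]
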